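/- Let s ∈ ℝ∖{0} and π a Hermitian projection of ℂ^{n+1} with π̄ = I_{1,n}πI_{1,n}⁻¹ and ππ̄ = π̄π = 0. Then for every λ ∈ ℝ, the matrix φ_{is,π}(λ) = I + (2is/(λ-is))π - (2is/(λ+is))π̄ is a real orthogonal matrix: φ_{is,π}(λ)‾ = φ_{is,π}(λ) and φ_{is,π}(λ)ᵗ φ_{is,π}(λ) = I. -/

import Mathlib

open scoped BigOperators
open Matrix

/-- `I_{1,n} = diag(1, -Iₙ)` over ℂ, of size `n+1` -/
noncomputable def Jmat (n : ℕ) : Matrix (Fin (n + 1)) (Fin (n + 1)) ℂ :=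
  Matrix.diagonal fun i => if i = 0 then 1 else -1

/-- the simple element `φ_{is,π}(λ) = I + (2is/(λ-is))π - (2is/(λ+is))π̄` -/
noncomputable def phi {n : ℕ} (s : ℝ) (p : Matrix (Fin (n + 1)) (Fin (n + 1)) ℂ)
    (lam : ℂ) : Matrix (Fin (n + 1)) (Fin (n + 1)) ℂ :=
  1 + (2 * Complex.I * s / (lam - Complex.I * s)) • p
    - (2 * Complex.I * s / (lam + Complex.I * s)) • p.map (starRingEnd ℂ)

/-- for `s ∈ ℝ∖{0}` and a Hermitian projection `π` with
`π̄ = I_{1,n}πI_{1,n}⁻¹` and `ππ̄ = π̄π = 0`, the matrix `φ_{is,π}(λ)` is, for every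
real `λ`, a real orthogonal matrix: `φ_{is,π}(λ)‾ = φ_{is,π}(λ)` and
`φ_{is,π}(λ)ᵗ φ_{is,π}(λ) = I`. -/
theorem stmt10 {n : ℕ} (s : ℝ) (hs : s ≠ 0)
    (p : Matrix (Fin (n + 1)) (Fin (n + 1)) ℂ)
    (hherm : p.conjTranspose = p) (hproj : p * p = p)
    (hre : p.map (starRingEnd ℂ) = Jmat n * p * (Jmat n)⁻¹)
    (hperp1 : p * p.map (starRingEnd ℂ) = 0)
    (hperp2 : p.map (starRingEnd ℂ) * p = 0) :
    ∀ lam : ℝ,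
      (phi s p (lam : ℂ)).map (starRingEnd ℂ) = phi s p (lam : ℂ) ∧
      (phi s p (lam : ℂ))ᵀ * phi s p (lam : ℂ) = 1 := by
  intro lam
  set q : Matrix (Fin (n + 1)) (Fin (n + 1)) ℂ := p.map (starRingEnd ℂ) with hqdef
  set a : ℂ := 2 * Complex.I * s / ((lam : ℂ) - Complex.I * s) with hadef
  set b : ℂ := 2 * Complex.I * s / ((lam : ℂ) + Complex.I * s) with hbdef
  have hd1 : ((lam : ℂ) - Complex.I * s) ≠ 0 := by
    intro h
    apply hs
    have := congrArg Complex.im h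
    simpa using this
  have hd2 : ((lam : ℂ) + Complex.I * s) ≠ 0 := by
    intro h
    apply hs
    have := congrArg Complex.im h
    simpa using this
  have hIs : (Complex.I * s) ≠ 0 := by
    simp [Complex.I_ne_zero, Complex.ofReal_eq_zero, hs]
  have ha : starRingEnd ℂ a = -b := by
    rw [hadef, hbdef, map_div₀]
    simp [Complex.conj_I, Complex.conj_ofReal, map_ofNat]
    ring
  have hb : starRingEnd ℂ b = -a := by
    rw [hadef, hbdef, map_div₀]
    simp [Complex.conj_I, Complex.conj_ofReal, map_ofNat]
    ring
  have hq2 : q * q = q := by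
    have := congrArg (fun M => M.map (starRingEnd ℂ)) hproj
    simpa [Matrix.map_mul] using this
  have hpc : ∀ i j, (starRingEnd ℂ) (p j i) = p i j := by
    intro i j
    have h : pᴴ i j = p i j := by rw [hherm]
    simpa [Matrix.conjTranspose_apply] using h
  have hpt : pᵀ = q := by
    ext i j
    simp [hqdef, Matrix.map_apply, Matrix.transpose_apply, ← hpc i j]
  have hqt : qᵀ = p := by
    ext i j
    simp [hqdef, Matrix.map_apply, Matrix.transpose_apply, hpc i j]
  have hk : a - b - a * b = 0 := by
    rw [hadef, hbdef]
    field_simp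
    ring
  constructor
  · ext i j
    have h1 : (starRingEnd ℂ) (p i j) = q i j := by
      simp [hqdef, Matrix.map_apply]
    have h2 : (starRingEnd ℂ) (q i j) = p i j := by
      simp [hqdef, Matrix.map_apply]
    simp only [phi, Matrix.map_apply, Matrix.add_apply, Matrix.sub_apply,
      Matrix.smul_apply, Matrix.one_apply, map_add, map_sub, _root_.map_mul,
      smul_eq_mul, ← hadef, ← hbdef, ← hqdef, ha, hb, h1, h2,
      apply_ite (starRingEnd ℂ), _root_.map_one, map_zero]
    ring
  · have hphi : phi s p (lam : ℂ) = 1 + a • p - b • q := rfl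
    have hphit : (phi s p (lam : ℂ))ᵀ = 1 + a • q - b • p := by
      rw [hphi]
      simp [Matrix.transpose_add, Matrix.transpose_sub, Matrix.transpose_smul,
        hpt, hqt]
    rw [hphit, hphi]
    simp only [add_mul, sub_mul, mul_add, mul_sub, one_mul, mul_one,
      Matrix.smul_mul, Matrix.mul_smul, hproj, hq2, hperp1, hperp2,
      ← hqdef, smul_zero, smul_smul]
    have hd1' : (-(Complex.I * (s:ℂ)) + (lam:ℂ)) ≠ 0 := by
      intro h; apply hd1; linear_combination h
    have hd2' : ((Complex.I * (s:ℂ)) + (lam:ℂ)) ≠ 0 := by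
      intro h; apply hd2; linear_combination h
    match_scalars
    all_goals (try ring)
    all_goals linear_combination hk
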